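/- arXiv:2308.04320 — 4 statements merged into one kernel-verified Lean document; each statement's English description precedes it below -/
import Mathlib

section
/- Let P ⊆ ℝ^{n₁} and Q ⊆ ℝ^{n₂} be polytopes whose product P × Q contains no integer point. Then P contains no integer point or Q contains no integer point, and consequently the minimum size of a branch-and-bound tree (with general disjunctions) proving integer-freeness of P × Q equals the minimum of the corresponding sizes for P and for Q: S_BB(P × Q) = min(S_BB(P), S_BB(Q)), where S_BB is defined to be +∞ for sets containing an integer point. -/
/-- A branch-and-bound tree with general disjunctions on `n` variables:
each internal node carries a disjunction `αᵀx ≤ δ ∨ αᵀx ≥ δ+1`. -/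
inductive BBTree (n : ℕ) where
  | leaf : BBTree n
  | node (α : Fin n → ℤ) (δ : ℤ) (l r : BBTree n) : BBTree n

/-- The size of a branch-and-bound tree is its number of leaves. -/
def BBTree.size {n : ℕ} : BBTree n → ℕ
  | .leaf => 1
  | .node _ _ l r => l.size + r.size

/-- Validity of a branch-and-bound tree for a set `P`: at every leaf the set
intersected with all inequalities along the root-leaf path is empty. -/
def BBValid {n : ℕ} (P : Set (Fin n → ℝ)) : BBTree n → Prop
  | .leaf => P = ∅
  | .node α δ l r =>
      BBValid (P ∩ {x | ∑ i, (α i : ℝ) * x i ≤ (δ : ℝ)}) l ∧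
      BBValid (P ∩ {x | (δ : ℝ) + 1 ≤ ∑ i, (α i : ℝ) * x i}) r

/-- `SBB P` is the minimum size of a branch-and-bound tree proving integer-freeness
of `P`; it is `⊤` (i.e. `+∞`) if no such tree exists (in particular when `P`
contains an integer point). -/
noncomputable def SBB {n : ℕ} (P : Set (Fin n → ℝ)) : ℕ∞ :=
  sInf {s : ℕ∞ | ∃ T : BBTree n, BBValid P T ∧ (T.size : ℕ∞) = s}

/-- The Cartesian product of `P ⊆ ℝ^{n₁}` and `Q ⊆ ℝ^{n₂}` inside `ℝ^{n₁+n₂}`. -/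
def prodSet {n₁ n₂ : ℕ} (P : Set (Fin n₁ → ℝ)) (Q : Set (Fin n₂ → ℝ)) :
    Set (Fin (n₁ + n₂) → ℝ) :=
  {w | (fun i => w (Fin.castAdd n₂ i)) ∈ P ∧ (fun j => w (Fin.natAdd n₁ j)) ∈ Q}

/-- A polytope: a bounded set described by finitely many linear inequalities. -/
def IsPolytope {n : ℕ} (P : Set (Fin n → ℝ)) : Prop :=
  Bornology.IsBounded P ∧
    ∃ (m : ℕ) (A : Fin m → Fin n → ℝ) (b : Fin m → ℝ),
      P = {x | ∀ i, ∑ j, A i j * x j ≤ b i}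

lemma BBTree.one_le_size {n : ℕ} (T : BBTree n) : 1 ≤ T.size := by
  induction T with
  | leaf => simp [BBTree.size]
  | node α δ l r ihl ihr => simp only [BBTree.size]; omega

lemma bbvalid_mono {n : ℕ} (T : BBTree n) :
    ∀ {P P' : Set (Fin n → ℝ)}, P' ⊆ P → BBValid P T → BBValid P' T := by
  induction T with
  | leaf =>
    intro P P' hsub h
    exact Set.eq_empty_of_subset_empty (h ▸ hsub)
  | node α δ l r ihl ihr =>
    intro P P' hsub h
    exact ⟨ihl (Set.inter_subset_inter_left _ hsub) h.1,
           ihr (Set.inter_subset_inter_left _ hsub) h.2⟩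

def liftTreeL (n₁ n₂ : ℕ) : BBTree n₁ → BBTree (n₁ + n₂)
  | .leaf => .leaf
  | .node α δ l r => .node (Fin.addCases α (fun _ => (0:ℤ))) δ
      (liftTreeL n₁ n₂ l) (liftTreeL n₁ n₂ r)

def liftTreeR (n₁ n₂ : ℕ) : BBTree n₂ → BBTree (n₁ + n₂)
  | .leaf => .leaf
  | .node α δ l r => .node (Fin.addCases (fun _ => (0:ℤ)) α) δ
      (liftTreeR n₁ n₂ l) (liftTreeR n₁ n₂ r)

lemma liftTreeL_size {n₁ n₂ : ℕ} (T : BBTree n₁) : (liftTreeL n₁ n₂ T).size = T.size := by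
  induction T with
  | leaf => rfl
  | node α δ l r ihl ihr => simp [liftTreeL, BBTree.size, ihl, ihr]

lemma liftTreeR_size {n₁ n₂ : ℕ} (T : BBTree n₂) : (liftTreeR n₁ n₂ T).size = T.size := by
  induction T with
  | leaf => rfl
  | node α δ l r ihl ihr => simp [liftTreeR, BBTree.size, ihl, ihr]

lemma liftTreeL_valid {n₁ n₂ : ℕ} (T : BBTree n₁) :
    ∀ (P : Set (Fin n₁ → ℝ)) (Q : Set (Fin n₂ → ℝ)),
      BBValid P T → BBValid (prodSet P Q) (liftTreeL n₁ n₂ T) := by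
  induction T with
  | leaf =>
    intro P Q h
    have h' : _ = ∅ := h
    show prodSet P Q = ∅
    ext w
    simp only [prodSet, Set.mem_setOf_eq, h', Set.mem_empty_iff_false, false_and, and_false]
  | node α δ l r ihl ihr =>
    intro P Q h
    have hsum : ∀ w : Fin (n₁ + n₂) → ℝ,
        (∑ i, ((Fin.addCases α (fun _ => (0:ℤ)) i : ℤ) : ℝ) * w i)
          = ∑ i, (α i : ℝ) * w (Fin.castAdd n₂ i) := by
      intro w
      rw [Fin.sum_univ_add]
      simp
    constructor
    · have h1 : prodSet P Q ∩
          {w | ∑ i, ((Fin.addCases α (fun _ => (0:ℤ)) i : ℤ) : ℝ) * w i ≤ (δ:ℝ)}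
          = prodSet (P ∩ {x | ∑ i, (α i : ℝ) * x i ≤ (δ:ℝ)}) Q := by
        ext w
        simp only [prodSet, Set.mem_inter_iff, Set.mem_setOf_eq, hsum]
        tauto
      rw [h1]
      exact ihl _ Q h.1
    · have h1 : prodSet P Q ∩
          {w | (δ:ℝ) + 1 ≤ ∑ i, ((Fin.addCases α (fun _ => (0:ℤ)) i : ℤ) : ℝ) * w i}
          = prodSet (P ∩ {x | (δ:ℝ) + 1 ≤ ∑ i, (α i : ℝ) * x i}) Q := by
        ext w
        simp only [prodSet, Set.mem_inter_iff, Set.mem_setOf_eq, hsum]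
        tauto
      rw [h1]; exact ihr _ Q h.2

lemma liftTreeR_valid {n₁ n₂ : ℕ} (T : BBTree n₂) :
    ∀ (P : Set (Fin n₁ → ℝ)) (Q : Set (Fin n₂ → ℝ)),
      BBValid Q T → BBValid (prodSet P Q) (liftTreeR n₁ n₂ T) := by
  induction T with
  | leaf =>
    intro P Q h
    have h' : _ = ∅ := h
    show prodSet P Q = ∅
    ext w
    simp only [prodSet, Set.mem_setOf_eq, h', Set.mem_empty_iff_false, false_and, and_false]
  | node α δ l r ihl ihr =>
    intro P Q h
    have hsum : ∀ w : Fin (n₁ + n₂) → ℝ,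
        (∑ i, ((Fin.addCases (fun _ => (0:ℤ)) α i : ℤ) : ℝ) * w i)
          = ∑ j, (α j : ℝ) * w (Fin.natAdd n₁ j) := by
      intro w
      rw [Fin.sum_univ_add]
      simp
    constructor
    · have h1 : prodSet P Q ∩
          {w | ∑ i, ((Fin.addCases (fun _ => (0:ℤ)) α i : ℤ) : ℝ) * w i ≤ (δ:ℝ)}
          = prodSet P (Q ∩ {y | ∑ j, (α j : ℝ) * y j ≤ (δ:ℝ)}) := by
        ext w
        simp only [prodSet, Set.mem_inter_iff, Set.mem_setOf_eq, hsum]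
        tauto
      rw [h1]; exact ihl P _ h.1
    · have h1 : prodSet P Q ∩
          {w | (δ:ℝ) + 1 ≤ ∑ i, ((Fin.addCases (fun _ => (0:ℤ)) α i : ℤ) : ℝ) * w i}
          = prodSet P (Q ∩ {y | (δ:ℝ) + 1 ≤ ∑ j, (α j : ℝ) * y j}) := by
        ext w
        simp only [prodSet, Set.mem_inter_iff, Set.mem_setOf_eq, hsum]
        tauto
      rw [h1]; exact ihr P _ h.2

lemma exists_coord_bound {n : ℕ} {P : Set (Fin n → ℝ)} (h : Bornology.IsBounded P) :
    ∃ M : ℝ, ∀ x ∈ P, ∀ i, |x i| ≤ M := by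
  obtain ⟨C, hC⟩ := (isBounded_iff_forall_norm_le).mp h
  refine ⟨C, fun x hx i => ?_⟩
  calc |x i| = ‖x i‖ := (Real.norm_eq_abs _).symm
    _ ≤ ‖x‖ := norm_le_pi_norm x i
    _ ≤ C := hC x hx

lemma key {n₁ n₂ : ℕ} (T : BBTree (n₁ + n₂)) :
    ∀ (P : Set (Fin n₁ → ℝ)) (Q : Set (Fin n₂ → ℝ)),
      Bornology.IsBounded P →
      BBValid (prodSet P Q) T →
      (∃ T₁ : BBTree n₁, BBValid P T₁ ∧ T₁.size ≤ T.size) ∨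
      (∃ T₂ : BBTree n₂, BBValid Q T₂ ∧ T₂.size ≤ T.size) := by
  classical
  induction T with
  | leaf =>
    intro P Q _ hval
    have hval' : prodSet P Q = ∅ := hval
    by_cases hP : P = ∅
    · exact Or.inl ⟨.leaf, hP, le_refl _⟩
    · right
      refine ⟨.leaf, ?_, le_refl _⟩
      obtain ⟨x, hx⟩ := Set.nonempty_iff_ne_empty.mpr hP
      show Q = ∅
      ext y
      simp only [Set.mem_empty_iff_false, iff_false]
      intro hy
      have hw : Fin.addCases (motive := fun _ => ℝ) x y ∈ prodSet P Q := by
        constructor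
        · have hfx : (fun i => Fin.addCases (motive := fun _ => ℝ) x y (Fin.castAdd n₂ i)) = x :=
            funext fun i => Fin.addCases_left i
          show (fun i => Fin.addCases (motive := fun _ => ℝ) x y (Fin.castAdd n₂ i)) ∈ P
          rw [hfx]; exact hx
        · have hfy : (fun j => Fin.addCases (motive := fun _ => ℝ) x y (Fin.natAdd n₁ j)) = y :=
            funext fun j => Fin.addCases_right j
          show (fun j => Fin.addCases (motive := fun _ => ℝ) x y (Fin.natAdd n₁ j)) ∈ Q
          rw [hfy]; exact hy
      rw [hval'] at hw
      exact hw
  | node α δ l r ihl ihr =>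
    intro P Q hPb hval
    obtain ⟨hl, hr⟩ := hval
    obtain ⟨M, hM⟩ := exists_coord_bound hPb
    set B : ℝ := (∑ i : Fin n₁, |(α (Fin.castAdd n₂ i) : ℝ)|) * M with hB
    have hfB : ∀ x ∈ P, |∑ i : Fin n₁, (α (Fin.castAdd n₂ i) : ℝ) * x i| ≤ B := by
      intro x hx
      calc |∑ i : Fin n₁, (α (Fin.castAdd n₂ i) : ℝ) * x i|
          ≤ ∑ i : Fin n₁, |(α (Fin.castAdd n₂ i) : ℝ) * x i| :=
            Finset.abs_sum_le_sum_abs _ _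
        _ ≤ ∑ i : Fin n₁, |(α (Fin.castAdd n₂ i) : ℝ)| * M := by
            refine Finset.sum_le_sum fun i _ => ?_
            rw [abs_mul]
            exact mul_le_mul_of_nonneg_left (hM x hx i) (abs_nonneg _)
        _ = B := by rw [hB, Finset.sum_mul]
    -- left child is valid on shifted products
    have hA : ∀ θ : ℤ,
        BBValid (prodSet (P ∩ {x | ∑ i, (α (Fin.castAdd n₂ i) : ℝ) * x i ≤ (θ:ℝ)})
          (Q ∩ {y | ∑ j, (α (Fin.natAdd n₁ j) : ℝ) * y j ≤ (δ:ℝ) - (θ:ℝ)})) l := by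
      intro θ
      refine bbvalid_mono l ?_ hl
      rintro w ⟨⟨hw1, hw2⟩, hw3, hw4⟩
      refine ⟨⟨hw1, hw3⟩, ?_⟩
      simp only [Set.mem_setOf_eq] at hw2 hw4 ⊢
      rw [Fin.sum_univ_add (f := fun i => (α i : ℝ) * w i)]
      linarith
    have hBv : ∀ θ : ℤ,
        BBValid (prodSet (P ∩ {x | ((θ:ℤ):ℝ) + 1 ≤ ∑ i, (α (Fin.castAdd n₂ i) : ℝ) * x i})
          (Q ∩ {y | (δ:ℝ) - (θ:ℝ) ≤ ∑ j, (α (Fin.natAdd n₁ j) : ℝ) * y j})) r := by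
      intro θ
      refine bbvalid_mono r ?_ hr
      rintro w ⟨⟨hw1, hw2⟩, hw3, hw4⟩
      refine ⟨⟨hw1, hw3⟩, ?_⟩
      simp only [Set.mem_setOf_eq] at hw2 hw4 ⊢
      rw [Fin.sum_univ_add (f := fun i => (α i : ℝ) * w i)]
      linarith
    have IH1 : ∀ θ : ℤ,
        (∃ T₁, BBValid (P ∩ {x | ∑ i, (α (Fin.castAdd n₂ i):ℝ) * x i ≤ (θ:ℝ)}) T₁ ∧ T₁.size ≤ l.size)
        ∨ (∃ T₂, BBValid (Q ∩ {y | ∑ j, (α (Fin.natAdd n₁ j):ℝ) * y j ≤ (δ:ℝ) - (θ:ℝ)}) T₂ ∧ T₂.size ≤ l.size) :=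
      fun θ => ihl _ _ (hPb.subset Set.inter_subset_left) (hA θ)
    have IH2 : ∀ θ : ℤ,
        (∃ T₁, BBValid (P ∩ {x | ((θ:ℤ):ℝ) + 1 ≤ ∑ i, (α (Fin.castAdd n₂ i):ℝ) * x i}) T₁ ∧ T₁.size ≤ r.size)
        ∨ (∃ T₂, BBValid (Q ∩ {y | (δ:ℝ) - (θ:ℝ) ≤ ∑ j, (α (Fin.natAdd n₁ j):ℝ) * y j}) T₂ ∧ T₂.size ≤ r.size) :=
      fun θ => ihr _ _ (hPb.subset Set.inter_subset_left) (hBv θ)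
    by_cases h1 : ∀ θ : ℤ,
        ∃ T₁, BBValid (P ∩ {x | ∑ i, (α (Fin.castAdd n₂ i):ℝ) * x i ≤ (θ:ℝ)}) T₁ ∧ T₁.size ≤ l.size
    · -- P ∩ {⋯ ≤ ⌈B⌉} = P
      obtain ⟨T₁, hT₁, hsz⟩ := h1 ⌈B⌉
      have hPeq : P ∩ {x | ∑ i, (α (Fin.castAdd n₂ i):ℝ) * x i ≤ ((⌈B⌉:ℤ):ℝ)} = P := by
        refine Set.inter_eq_left.mpr fun x hx => ?_
        have := hfB x hx
        have h2 : B ≤ ((⌈B⌉:ℤ):ℝ) := Int.le_ceil B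
        simp only [Set.mem_setOf_eq]
        calc ∑ i : Fin n₁, (α (Fin.castAdd n₂ i):ℝ) * x i
            ≤ |∑ i : Fin n₁, (α (Fin.castAdd n₂ i):ℝ) * x i| := le_abs_self _
          _ ≤ B := this
          _ ≤ _ := h2
      exact Or.inl ⟨T₁, hPeq ▸ hT₁, le_trans hsz (by simp only [BBTree.size]; omega)⟩
    · obtain ⟨θa, hθa⟩ := not_forall.mp h1
      have hlow : ∀ θ : ℤ,
          (¬ ∃ T₁, BBValid (P ∩ {x | ∑ i, (α (Fin.castAdd n₂ i):ℝ) * x i ≤ (θ:ℝ)}) T₁ ∧ T₁.size ≤ l.size)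
          → -⌈B⌉ ≤ θ := by
        intro θ hn
        by_contra hlt
        push_neg at hlt
        apply hn
        refine ⟨.leaf, ?_, l.one_le_size⟩
        show _ = ∅
        ext x
        simp only [Set.mem_inter_iff, Set.mem_setOf_eq, Set.mem_empty_iff_false, iff_false, not_and]
        intro hx hsum
        have h2 : -B ≤ ∑ i : Fin n₁, (α (Fin.castAdd n₂ i):ℝ) * x i := by
          have := hfB x hx
          have := neg_abs_le (∑ i : Fin n₁, (α (Fin.castAdd n₂ i):ℝ) * x i)
          linarith
        have h3 : ((θ:ℤ):ℝ) < ((-⌈B⌉:ℤ):ℝ) := by exact_mod_cast hlt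
        have h4 : B ≤ ((⌈B⌉:ℤ):ℝ) := Int.le_ceil B
        push_cast at h3
        linarith
      obtain ⟨θ₀, hθ₀, hθ₀min⟩ := Int.exists_least_of_bdd
        (P := fun θ => ¬ ∃ T₁, BBValid (P ∩ {x | ∑ i, (α (Fin.castAdd n₂ i):ℝ) * x i ≤ (θ:ℝ)}) T₁ ∧ T₁.size ≤ l.size)
        ⟨-⌈B⌉, hlow⟩ ⟨θa, hθa⟩
      have hPl : ∃ T₁, BBValid (P ∩ {x | ∑ i, (α (Fin.castAdd n₂ i):ℝ) * x i ≤ ((θ₀ - 1 : ℤ):ℝ)}) T₁ ∧ T₁.size ≤ l.size := by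
        by_contra hc
        have := hθ₀min _ hc
        omega
      obtain ⟨Ta, hTa, hTasz⟩ := hPl
      by_cases h2 : ∃ T₂, BBValid (P ∩ {x | ((θ₀ - 1 : ℤ):ℝ) + 1 ≤ ∑ i, (α (Fin.castAdd n₂ i):ℝ) * x i}) T₂ ∧ T₂.size ≤ r.size
      · obtain ⟨Tb, hTb, hTbsz⟩ := h2
        left
        refine ⟨.node (fun i => α (Fin.castAdd n₂ i)) (θ₀ - 1) Ta Tb, ⟨hTa, hTb⟩, ?_⟩
        simp only [BBTree.size]; omega
      · have hQl : ∃ T₂, BBValid (Q ∩ {y | ∑ j, (α (Fin.natAdd n₁ j):ℝ) * y j ≤ (δ:ℝ) - (θ₀:ℝ)}) T₂ ∧ T₂.size ≤ l.size := by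
          rcases IH1 θ₀ with h | h
          · exact absurd h hθ₀
          · exact h
        have hQr : ∃ T₂, BBValid (Q ∩ {y | (δ:ℝ) - ((θ₀ - 1 : ℤ):ℝ) ≤ ∑ j, (α (Fin.natAdd n₁ j):ℝ) * y j}) T₂ ∧ T₂.size ≤ r.size := by
          rcases IH2 (θ₀ - 1) with h | h
          · exact absurd h h2
          · exact h
        obtain ⟨Tc, hTc, hTcsz⟩ := hQl
        obtain ⟨Td, hTd, hTdsz⟩ := hQr
        right
        refine ⟨.node (fun j => α (Fin.natAdd n₁ j)) (δ - θ₀) Tc Td, ⟨?_, ?_⟩, ?_⟩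
        · have hcast : ((δ - θ₀ : ℤ):ℝ) = (δ:ℝ) - (θ₀:ℝ) := by push_cast; ring
          show BBValid (Q ∩ {y | ∑ j, (α (Fin.natAdd n₁ j):ℝ) * y j ≤ ((δ - θ₀ : ℤ):ℝ)}) Tc
          rw [hcast]; exact hTc
        · have hcast : ((δ - θ₀ : ℤ):ℝ) + 1 = (δ:ℝ) - ((θ₀ - 1 : ℤ):ℝ) := by push_cast; ring
          show BBValid (Q ∩ {y | ((δ - θ₀ : ℤ):ℝ) + 1 ≤ ∑ j, (α (Fin.natAdd n₁ j):ℝ) * y j}) Td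
          rw [hcast]; exact hTd
        · simp only [BBTree.size]; omega


/-- If the product of two polytopes is integer-free then one of the factors is
integer-free, and `S_BB(P × Q) = min (S_BB(P), S_BB(Q))`. -/
theorem SBB_prod (n₁ n₂ : ℕ) (P : Set (Fin n₁ → ℝ)) (Q : Set (Fin n₂ → ℝ))
    (hP : IsPolytope P) (hQ : IsPolytope Q)
    (hfree : ¬ ∃ w ∈ prodSet P Q, ∀ i, ∃ z : ℤ, w i = z) :
    ((¬ ∃ x ∈ P, ∀ i, ∃ z : ℤ, x i = z) ∨ (¬ ∃ y ∈ Q, ∀ j, ∃ z : ℤ, y j = z)) ∧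
    SBB (prodSet P Q) = min (SBB P) (SBB Q) := by
  constructor
  · by_cases hx : ∃ x ∈ P, ∀ i, ∃ z : ℤ, x i = z
    · right
      rintro ⟨y, hy, hyint⟩
      obtain ⟨x, hxP, hxint⟩ := hx
      apply hfree
      refine ⟨Fin.addCases (motive := fun _ => ℝ) x y, ⟨?_, ?_⟩, ?_⟩
      · have hfx : (fun i => Fin.addCases (motive := fun _ => ℝ) x y (Fin.castAdd n₂ i)) = x :=
          funext fun i => Fin.addCases_left i
        show (fun i => Fin.addCases (motive := fun _ => ℝ) x y (Fin.castAdd n₂ i)) ∈ P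
        rw [hfx]; exact hxP
      · have hfy : (fun j => Fin.addCases (motive := fun _ => ℝ) x y (Fin.natAdd n₁ j)) = y :=
          funext fun j => Fin.addCases_right j
        show (fun j => Fin.addCases (motive := fun _ => ℝ) x y (Fin.natAdd n₁ j)) ∈ Q
        rw [hfy]; exact hy
      · intro i
        refine Fin.addCases (motive := fun i => ∃ z : ℤ, Fin.addCases (motive := fun _ => ℝ) x y i = z) ?_ ?_ i
        · intro j
          rw [Fin.addCases_left]
          exact hxint j
        · intro j
          rw [Fin.addCases_right]
          exact hyint j
    · left; exact hx
  · apply le_antisymm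
    · apply le_min
      · refine le_sInf ?_
        rintro s ⟨T, hT, rfl⟩
        exact sInf_le ⟨liftTreeL n₁ n₂ T, liftTreeL_valid T P Q hT, by rw [liftTreeL_size]⟩
      · refine le_sInf ?_
        rintro s ⟨T, hT, rfl⟩
        exact sInf_le ⟨liftTreeR n₁ n₂ T, liftTreeR_valid T P Q hT, by rw [liftTreeR_size]⟩
    · refine le_sInf ?_
      rintro s ⟨T, hT, rfl⟩
      rcases key T P Q hP.1 hT with ⟨T₁, h₁, hsz⟩ | ⟨T₂, h₂, hsz⟩
      · exact le_trans (min_le_left _ _)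
          (le_trans (sInf_le ⟨T₁, h₁, rfl⟩) (by exact_mod_cast hsz))
      · exact le_trans (min_le_right _ _)
          (le_trans (sInf_le ⟨T₂, h₂, rfl⟩) (by exact_mod_cast hsz))
end

section
/- Fix p ≥ 1 and i with 1 ≤ i ≤ p. For a real number g, write ⌊g⌋_{2^{p-i+1}} for the largest integer multiple of 2^{p-i+1} that is at most g, and {g} = g - ⌊g⌋_{2^{p-i+1}}. Let f : ℝ² → ℝ be non-decreasing (in each argument) with range contained in (0, 1/2). Then the function (g₁, g₂) ↦ ⌊g₁⌋_{2^{p-i+1}} + f({g₁}, g₂) is non-decreasing in both arguments. -/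
/-- If `f : ℝ² → ℝ` is non-decreasing with range in `(0, 1/2)`, then
`(g₁, g₂) ↦ ⌊g₁⌋_{2^{p-i+1}} + f({g₁}, g₂)` is non-decreasing in both arguments,
where `⌊g⌋_{2^k}` rounds down to the nearest integer multiple of `2^k` and
`{g} = g - ⌊g⌋_{2^k}`. -/
theorem floor_frac_monotone (p i : ℕ) (hi1 : 1 ≤ i) (hip : i ≤ p)
    (f : ℝ → ℝ → ℝ)
    (hf : ∀ x x' y y', x ≤ x' → y ≤ y' → f x y ≤ f x' y')
    (hrange : ∀ x y, f x y ∈ Set.Ioo (0 : ℝ) (1 / 2)) :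
    ∀ g₁ g₁' g₂ g₂' : ℝ, g₁ ≤ g₁' → g₂ ≤ g₂' →
      (⌊g₁ / (2 : ℝ) ^ (p - i + 1)⌋ : ℝ) * 2 ^ (p - i + 1) +
          f (g₁ - (⌊g₁ / (2 : ℝ) ^ (p - i + 1)⌋ : ℝ) * 2 ^ (p - i + 1)) g₂ ≤
      (⌊g₁' / (2 : ℝ) ^ (p - i + 1)⌋ : ℝ) * 2 ^ (p - i + 1) +
          f (g₁' - (⌊g₁' / (2 : ℝ) ^ (p - i + 1)⌋ : ℝ) * 2 ^ (p - i + 1)) g₂' := by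
  intro g₁ g₁' g₂ g₂' h1 h2
  set k := p - i + 1 with hk
  have hc : (1 : ℝ) ≤ 2 ^ k := one_le_pow₀ (by norm_num)
  have hcpos : (0 : ℝ) < 2 ^ k := by positivity
  have hfloor : ⌊g₁ / (2 : ℝ) ^ k⌋ ≤ ⌊g₁' / (2 : ℝ) ^ k⌋ :=
    Int.floor_le_floor (by gcongr)
  rcases eq_or_lt_of_le hfloor with heq | hlt
  · rw [heq]
    have := hf (g₁ - (⌊g₁' / (2 : ℝ) ^ k⌋ : ℝ) * 2 ^ k)
      (g₁' - (⌊g₁' / (2 : ℝ) ^ k⌋ : ℝ) * 2 ^ k) g₂ g₂' (by linarith) h2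
    linarith
  · have hstep : (⌊g₁ / (2 : ℝ) ^ k⌋ : ℝ) + 1 ≤ ⌊g₁' / (2 : ℝ) ^ k⌋ := by
      exact_mod_cast hlt
    have h3 := (hrange (g₁ - (⌊g₁ / (2 : ℝ) ^ k⌋ : ℝ) * 2 ^ k) g₂).2
    have h4 := (hrange (g₁' - (⌊g₁' / (2 : ℝ) ^ k⌋ : ℝ) * 2 ^ k) g₂').1
    nlinarith [hcpos, hc]
end

section
/- Let b : X → ℤ (for an arbitrary set X) take values in {0, ..., 2^{p+1}-1}, and for 0 ≤ i ≤ p define b_i(x) = ⌊b(x)⌋_{2^{p-i}} (rounding down to the nearest multiple of 2^{p-i}). Suppose b(x) = max{λ ∈ {0,...,2^{p+1}-1} : C(x, Λ - λ) = 1} for a function C : X × ℝ → {0,1} that is non-increasing in λ (i.e., C(x, Λ-λ) = 1 and λ' ≤ λ imply C(x, Λ-λ') = 1). Then for 1 ≤ i ≤ p the recurrence b_i(x) = b_{i-1}(x) + 2^{p-i} · C(x, Λ - b_{i-1}(x) - 2^{p-i}) holds. -/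
/-- Correctness of binary search: if `b x` is the largest `λ ∈ {0,…,2^{p+1}-1}`
with `C x (Λ - λ) = 1` for a `{0,1}`-valued `C` that is non-increasing in `λ`,
and `b_i x = ⌊b x⌋_{2^{p-i}}` (rounding down to a multiple of `2^{p-i}`), then
`b_i x = b_{i-1} x + 2^{p-i} · C x (Λ - b_{i-1} x - 2^{p-i})` for `1 ≤ i ≤ p`. -/
theorem binary_search_recurrence (X : Type*) (p : ℕ) (Λ : ℝ) (C : X → ℝ → ℕ)
    (hC01 : ∀ x t, C x t ≤ 1)
    (hmono : ∀ x (lam lam' : ℤ), lam' ≤ lam → C x (Λ - (lam : ℝ)) = 1 →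
      C x (Λ - (lam' : ℝ)) = 1)
    (h0 : ∀ x, C x (Λ - ((0 : ℤ) : ℝ)) = 1)
    (b : X → ℤ)
    (hb : ∀ x, 0 ≤ b x ∧ b x ≤ 2 ^ (p + 1) - 1 ∧ C x (Λ - (b x : ℝ)) = 1 ∧
      ∀ lam : ℤ, 0 ≤ lam → lam ≤ 2 ^ (p + 1) - 1 → C x (Λ - (lam : ℝ)) = 1 → lam ≤ b x) :
    ∀ (x : X) (i : ℕ), 1 ≤ i → i ≤ p →
      b x / 2 ^ (p - i) * 2 ^ (p - i) =
        b x / 2 ^ (p - (i - 1)) * 2 ^ (p - (i - 1)) +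
          2 ^ (p - i) *
            (C x (Λ - ((b x / 2 ^ (p - (i - 1)) * 2 ^ (p - (i - 1)) : ℤ) : ℝ) -
              (2 : ℝ) ^ (p - i)) : ℤ) := by
  intro x i hi1 hip
  obtain ⟨hb0, hb1, hbC, hbmax⟩ := hb x
  have hpk : p - (i - 1) = (p - i) + 1 := by omega
  rw [hpk]
  set k := p - i with hk
  set m := b x with hm
  set n := m / 2 ^ k with hn
  have h2k : (0:ℤ) < 2 ^ k := by positivity
  have hrle : n * 2 ^ k ≤ m := Int.ediv_mul_le m h2k.ne'
  have hrlt : m < n * 2 ^ k + 2 ^ k := by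
    have := Int.lt_ediv_add_one_mul_self m h2k
    nlinarith [this]
  have hq : m / 2 ^ (k + 1) = n / 2 := by
    rw [pow_succ]
    have h01 : n / 2 * 2 ≤ n ∧ n ≤ n / 2 * 2 + 1 := by omega
    have hs0 : 0 ≤ m - n / 2 * (2 ^ k * 2) := by nlinarith [h01.1]
    have hs1 : m - n / 2 * (2 ^ k * 2) < 2 ^ k * 2 := by nlinarith [h01.2]
    have hdiv := Int.add_mul_ediv_right (m - n / 2 * (2 ^ k * 2)) (n / 2)
      (c := 2 ^ k * 2) (by positivity)
    have heq : m - n / 2 * (2 ^ k * 2) + n / 2 * (2 ^ k * 2) = m := by ring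
    rw [heq, Int.ediv_eq_zero_of_lt hs0 hs1, zero_add] at hdiv
    exact hdiv
  rw [hq]
  have hn0 : 0 ≤ n := Int.ediv_nonneg hb0 (le_of_lt h2k)
  have hcast : Λ - ((n / 2 * 2 ^ (k + 1) : ℤ) : ℝ) - (2:ℝ) ^ k
      = Λ - ((n / 2 * 2 ^ (k + 1) + 2 ^ k : ℤ) : ℝ) := by push_cast; ring
  rcases Int.emod_two_eq n with h01 | h01
  · -- bit 0
    have hne : n = 2 * (n / 2) := by omega
    have hr : n * 2 ^ k = n / 2 * 2 ^ (k + 1) := by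
      rw [pow_succ]; nlinarith [hne]
    have hCzero : C x (Λ - ((n / 2 * 2 ^ (k + 1) : ℤ) : ℝ) - (2:ℝ) ^ k) = 0 := by
      by_contra hne1
      have hc1 : C x (Λ - ((n / 2 * 2 ^ (k + 1) + 2 ^ k : ℤ) : ℝ)) = 1 := by
        rw [← hcast]
        have := hC01 x (Λ - ((n / 2 * 2 ^ (k + 1) : ℤ) : ℝ) - (2:ℝ) ^ k)
        omega
      have hlam0 : (0:ℤ) ≤ n / 2 * 2 ^ (k + 1) + 2 ^ k := by positivity
      have hdvd : (2:ℤ) ^ (k + 1) ∣ 2 ^ (p + 1) - n / 2 * 2 ^ (k + 1) := by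
        exact dvd_sub (pow_dvd_pow 2 (by omega)) ⟨n / 2, mul_comm _ _⟩
      have hlt : n / 2 * 2 ^ (k + 1) < 2 ^ (p + 1) := by
        nlinarith [hr, hrle, hb1]
      have hle : n / 2 * 2 ^ (k + 1) + 2 ^ (k + 1) ≤ 2 ^ (p + 1) := by
        have := Int.le_of_dvd (by omega) hdvd
        omega
      have hlamle : n / 2 * 2 ^ (k + 1) + 2 ^ k ≤ 2 ^ (p + 1) - 1 := by
        have : (2:ℤ) ^ (k + 1) = 2 ^ k * 2 := by ring
        omega
      have := hbmax _ hlam0 hlamle hc1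
      omega
    rw [hCzero]
    omega
  · -- bit 1
    have hne : n = 2 * (n / 2) + 1 := by omega
    have hr : n * 2 ^ k = n / 2 * 2 ^ (k + 1) + 2 ^ k := by
      rw [pow_succ]; nlinarith [hne]
    have hle : n / 2 * 2 ^ (k + 1) + 2 ^ k ≤ m := by omega
    have hc1 : C x (Λ - ((n / 2 * 2 ^ (k + 1) + 2 ^ k : ℤ) : ℝ)) = 1 :=
      hmono x m _ hle hbC
    rw [hcast, hc1]
    omega
end

section
/- A CNF 𝒞 = {C₁,...,C_m} over variables partitioned as X₀ ∪ X₁ admits an (X₀, X₁)-certificate of infeasibility if and only if 𝒞 is unsatisfiable. -/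
/-- A CNF `C` with clauses over variables partitioned as `V₀ ⊕ V₁` (clauses are
sets of literals, i.e. variable/polarity pairs) admits a monotone
`(X₀,X₁)`-certificate of infeasibility iff it is unsatisfiable. -/
theorem certificate_iff_unsat (V₀ V₁ : Type*) (m : ℕ)
    (C : Fin m → Set ((V₀ ⊕ V₁) × Bool)) :
    (∃ F : Set (Fin m) → Bool,
      (∀ A B : Set (Fin m), A ⊆ B → F A ≤ F B) ∧
      ∀ A : Set (Fin m),
        (F A = false →
          ¬ ∃ a₁ : V₁ → Bool, ∀ i ∉ A, ∃ v b, (Sum.inr v, b) ∈ C i ∧ a₁ v = b) ∧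
        (F A = true →
          ¬ ∃ a₀ : V₀ → Bool, ∀ i ∈ A, ∃ v b, (Sum.inl v, b) ∈ C i ∧ a₀ v = b)) ↔
    ¬ ∃ a : (V₀ ⊕ V₁) → Bool, ∀ i, ∃ l ∈ C i, a l.1 = l.2 := by
  classical
  constructor
  · rintro ⟨F, hmono, hcert⟩ ⟨a, ha⟩
    set A : Set (Fin m) := {i | ∃ v b, (Sum.inl v, b) ∈ C i ∧ a (Sum.inl v) = b} with hA
    rcases Bool.eq_false_or_eq_true (F A) with hF | hF
    case inl =>
      exact (hcert A).2 hF ⟨fun v => a (Sum.inl v), fun i hi => hi⟩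
    case inr =>
      refine (hcert A).1 hF ⟨fun v => a (Sum.inr v), fun i hi => ?_⟩
      obtain ⟨⟨x, b⟩, hl, hal⟩ := ha i
      cases x with
      | inl v => exact absurd ⟨v, b, hl, hal⟩ hi
      | inr v => exact ⟨v, b, hl, hal⟩
  · intro hunsat
    refine ⟨fun A => if ∃ a₁ : V₁ → Bool,
        ∀ i ∉ A, ∃ v b, (Sum.inr v, b) ∈ C i ∧ a₁ v = b then true else false, ?_, ?_⟩
    · intro A B hAB
      by_cases h : ∃ a₁ : V₁ → Bool, ∀ i ∉ A, ∃ v b, (Sum.inr v, b) ∈ C i ∧ a₁ v = b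
      · obtain ⟨a₁, ha₁⟩ := h
        have hB : ∃ a₁ : V₁ → Bool, ∀ i ∉ B, ∃ v b, (Sum.inr v, b) ∈ C i ∧ a₁ v = b :=
          ⟨a₁, fun i hi => ha₁ i (fun hiA => hi (hAB hiA))⟩
        dsimp only
        rw [if_pos hB]
        exact Bool.le_true _
      · dsimp only
        rw [if_neg h]
        exact Bool.false_le _
    · intro A
      constructor
      · intro hF h
        dsimp only at hF
        rw [if_pos h] at hF
        cases hF
      · intro hF ⟨a₀, ha₀⟩
        by_cases h : ∃ a₁ : V₁ → Bool, ∀ i ∉ A, ∃ v b, (Sum.inr v, b) ∈ C i ∧ a₁ v = b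
        · obtain ⟨a₁, ha₁⟩ := h
          refine hunsat ⟨Sum.elim a₀ a₁, fun i => ?_⟩
          by_cases hi : i ∈ A
          · obtain ⟨v, b, hvb, hab⟩ := ha₀ i hi
            exact ⟨(Sum.inl v, b), hvb, hab⟩
          · obtain ⟨v, b, hvb, hab⟩ := ha₁ i hi
            exact ⟨(Sum.inr v, b), hvb, hab⟩
        · dsimp only at hF
          rw [if_neg h] at hF
          cases hF
end
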